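/- arXiv:1608.05924 — 4 statements merged into one kernel-verified Lean document; each statement's English description precedes it below -/
import Mathlib

section
/- Let x, y ∈ ℂ⁴ be linearly independent and z, w ∈ ℂ⁴ be linearly independent. Let P be the primal Plücker matrix of (x,y) and let Q* := z wᵀ − w zᵀ be the dual Plücker matrix of (z,w). Then trace(P Q*) = 0 if and only if the two lines span{x,y} and span{z,w} have nontrivial intersection, i.e., span{x,y} ∩ span{z,w} ≠ {0}. -/
open Matrix

/-- The primal Plücker matrix of a pair of vectors `x y : ℂ⁴`:
the skew-symmetric matrix with above-diagonal entries
`P₀₁ = p₂₃, P₀₂ = −p₁₃, P₀₃ = p₁₂, P₁₂ = p₀₃, P₁₃ = −p₀₂, P₂₃ = p₀₁`,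
where `p_{ij} = x_i y_j − x_j y_i`. -/
noncomputable def primalMat (x y : Fin 4 → ℂ) : Matrix (Fin 4) (Fin 4) ℂ :=
  !![0, x 2 * y 3 - x 3 * y 2, -(x 1 * y 3 - x 3 * y 1), x 1 * y 2 - x 2 * y 1;
     -(x 2 * y 3 - x 3 * y 2), 0, x 0 * y 3 - x 3 * y 0, -(x 0 * y 2 - x 2 * y 0);
     x 1 * y 3 - x 3 * y 1, -(x 0 * y 3 - x 3 * y 0), 0, x 0 * y 1 - x 1 * y 0;
     -(x 1 * y 2 - x 2 * y 1), x 0 * y 2 - x 2 * y 0, -(x 0 * y 1 - x 1 * y 0), 0]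

/-- The dual Plücker matrix of a pair of vectors `z w : ℂ⁴`, namely `z wᵀ − w zᵀ`. -/
noncomputable def dualMat (z w : Fin 4 → ℂ) : Matrix (Fin 4) (Fin 4) ℂ :=
  Matrix.of fun i j => z i * w j - z j * w i

/-! `trace (P Q*)` pairs the Plücker coordinates of the two lines; up to the factor `-2`
(skew-symmetry counts each 2×2 minor twice) this pairing is the Laplace expansion of
`det [x; y; z; w]` along its first two rows. The determinant vanishes exactly when
`x, y, z, w` are dependent, and since each pair is independent, a dependence among the four
is the same as a nonzero common vector of the two spans. -/

theorem trace_primalMat_mul_dualMat (x y z w : Fin 4 → ℂ) :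
    (primalMat x y * dualMat z w).trace = -2 * (Matrix.of ![x, y, z, w]).det := by
  simp [Matrix.trace, primalMat, dualMat, Matrix.vecHead, Matrix.vecTail,
    Matrix.det_succ_row_zero, Fin.sum_univ_succ, Fin.succAbove]
  ring

theorem Matrix.det_of_eq_zero_iff_not_linearIndependent {K n : Type*} [Field K] [Fintype n]
    [DecidableEq n] (v : n → n → K) :
    (Matrix.of v).det = 0 ↔ ¬LinearIndependent K v := by
  rw [Iff.comm, ← not_ne_iff, not_iff_not, ← isUnit_iff_ne_zero, ← Matrix.isUnit_iff_isUnit_det,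
    ← Matrix.linearIndependent_rows_iff_isUnit]
  rfl

theorem linearIndependent_vecFour_iff_disjoint {R M : Type*} [Ring R] [AddCommGroup M]
    [Module R M] {x y z w : M} (hxy : LinearIndependent R ![x, y])
    (hzw : LinearIndependent R ![z, w]) :
    LinearIndependent R ![x, y, z, w] ↔
      Disjoint (Submodule.span R {x, y}) (Submodule.span R {z, w}) := by
  have hsplit : ![x, y, z, w] ∘ finSumFinEquiv = Sum.elim ![x, y] ![z, w] := by
    ext (i | i) <;> fin_cases i <;> rfl
  rw [← linearIndependent_equiv' _ hsplit, linearIndependent_sum, Sum.elim_comp_inl,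
    Sum.elim_comp_inr, Matrix.range_cons_cons_empty, Matrix.range_cons_cons_empty]
  exact ⟨fun h ↦ h.2.2, fun h ↦ ⟨hxy, hzw, h⟩⟩

/-- `trace (P Q*) = 0` iff the two lines `span{x,y}` and `span{z,w}` meet. -/
theorem trace_primal_dual_eq_zero_iff_lines_meet
    (x y z w : Fin 4 → ℂ)
    (hxy : LinearIndependent ℂ ![x, y]) (hzw : LinearIndependent ℂ ![z, w]) :
    (primalMat x y * dualMat z w).trace = 0 ↔
      Submodule.span ℂ {x, y} ⊓ Submodule.span ℂ {z, w} ≠ ⊥ := by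
  rw [trace_primalMat_mul_dualMat, mul_eq_zero, Matrix.det_of_eq_zero_iff_not_linearIndependent,
    linearIndependent_vecFour_iff_disjoint hxy hzw, disjoint_iff]
  norm_num
end

section
/- Let ℓ₁, ℓ₂, ℓ₃ be lines in P³, i.e., 2-dimensional subspaces of ℂ⁴, and for each i let P_i be the primal Plücker matrix of a basis of ℓ_i. Then the following are equivalent: (i) the three lines are concurrent, i.e., there exists a nonzero v ∈ ℓ₁ ∩ ℓ₂ ∩ ℓ₃; (ii) the lines are pairwise intersecting (ℓ_i ∩ ℓ_j ≠ {0} for all i < j) and for each standard basis vector u ∈ {e₁, e₂, e₃, e₄} of ℂ⁴, the three vectors P₁u, P₂u, P₃u ∈ ℂ⁴ are linearly dependent. -/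
/-!
A point `v` lies on the line `span {x, y}` exactly when `P(x, y) v = 0`, and
`u ⬝ᵥ P(x, y) w = det (x, y, u, w)`. If the lines share a point `v`, each `Pᵢ eᵦ` is therefore
annihilated by both `v` and `eᵦ`, so the three vectors lie in a plane (or vanish, when `v` is
a multiple of `eᵦ`). Conversely, three pairwise meeting lines without a common point form a
triangle with vertices `pᵢ` (`pᵢ` on the two lines other than `ℓᵢ`) spanning a plane `V`;
for `eᵦ ∉ V` the pairing `pᵢ ⬝ᵥ Pⱼ eᵦ` is a nonzero determinant when `i = j` and vanishes
otherwise, which makes the `Pᵢ eᵦ` independent.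
-/

open Matrix

open Module Submodule

section LinearAlgebra

variable {K V : Type*} [Field K] [AddCommGroup V] [Module K V]

theorem linearIndependent_of_dotProduct_diagonal {ι n : Type*} [Fintype ι] [Fintype n]
    (t w : ι → n → K) (hoff : ∀ i j, i ≠ j → t i ⬝ᵥ w j = 0) (hdiag : ∀ i, t i ⬝ᵥ w i ≠ 0) :
    LinearIndependent K w := by
  classical
  refine Fintype.linearIndependent_iff.mpr fun g hg i => ?_
  have hi := congrArg (t i ⬝ᵥ ·) hg
  simp only [dotProduct_sum, dotProduct_smul, dotProduct_zero, smul_eq_mul] at hi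
  rw [Finset.sum_eq_single i (fun j _ hj => by rw [hoff i j (Ne.symm hj), mul_zero])
    (by simp)] at hi
  exact (mul_eq_zero.mp hi).resolve_right (hdiag i)

theorem not_linearIndependent_of_dotProduct_eq_zero {m n ι : Type*} [Fintype m] [Fintype n]
    [Fintype ι] {a : m → n → K} (ha : LinearIndependent K a) {w : ι → n → K}
    (hw : ∀ k i, a k ⬝ᵥ w i = 0) (hcard : Fintype.card n < Fintype.card m + Fintype.card ι) :
    ¬ LinearIndependent K w := by
  intro hw_ind
  let A : Matrix m n K := Matrix.of a
  have hker : span K (Set.range w) ≤ LinearMap.ker A.mulVecLin := by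
    rw [span_le]
    rintro _ ⟨i, rfl⟩
    funext k
    exact hw k i
  have hle := Submodule.finrank_mono hker
  have hrank : A.rank = Fintype.card m := LinearIndependent.rank_matrix ha
  have hnullity := LinearMap.finrank_range_add_finrank_ker A.mulVecLin
  rw [finrank_span_eq_card hw_ind] at hle
  rw [← Matrix.rank, hrank, finrank_fintype_fun_eq_card] at hnullity
  omega

theorem finrank_span_pair {x y : V} (h : LinearIndependent K ![x, y]) :
    finrank K (span K {x, y}) = 2 := by
  rw [← Matrix.range_cons_cons_empty x y, finrank_span_eq_card h, Fintype.card_fin]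

theorem span_pair_eq_of_mem {ℓ : Submodule K V} [FiniteDimensional K ℓ] (hℓ : finrank K ℓ = 2)
    {a b : V} (hab : LinearIndependent K ![a, b]) (ha : a ∈ ℓ) (hb : b ∈ ℓ) :
    span K {a, b} = ℓ :=
  eq_of_le_of_finrank_le (span_le.mpr (Set.insert_subset ha (Set.singleton_subset_iff.mpr hb)))
    (by rw [hℓ, finrank_span_pair hab])

theorem sup_ne_top_of_inf_ne_bot [FiniteDimensional K V] {s t : Submodule K V}
    (hst : finrank K s + finrank K t ≤ finrank K V) (h : s ⊓ t ≠ ⊥) : s ⊔ t ≠ ⊤ := by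
  intro htop
  have hdim := finrank_sup_add_finrank_inf_eq s t
  rw [htop, finrank_top] at hdim
  have := one_le_finrank_iff.mpr h
  omega

theorem exists_single_notMem_of_ne_top {n : Type*} [Finite n] [DecidableEq n]
    {W : Submodule K (n → K)} (hW : W ≠ ⊤) : ∃ b, Pi.single b 1 ∉ W := by
  by_contra! h
  refine hW (eq_top_iff.mpr ?_)
  rw [← (Pi.basisFun K n).span_eq, span_le]
  rintro _ ⟨b, rfl⟩
  simpa using h b

theorem linearIndependent_four_of_notMem_span {x y u w : V}
    (hxy : LinearIndependent K ![x, y]) (hu : u ∉ span K {x, y}) (hw : w ∉ span K {x, y, u}) :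
    LinearIndependent K ![x, y, u, w] := by
  have hsnoc₃ : ![x, y, u] = Fin.snoc ![x, y] u := by ext i; fin_cases i <;> rfl
  have hsnoc₄ : ![x, y, u, w] = Fin.snoc ![x, y, u] w := by ext i; fin_cases i <;> rfl
  have hrange₃ : Set.range ![x, y, u] = {x, y, u} := by
    simp only [Matrix.range_cons, Matrix.range_empty, Set.union_empty, Set.singleton_union]
  rw [hsnoc₄]
  refine LinearIndependent.finSnoc ?_ (by rwa [hrange₃])
  rw [hsnoc₃]
  exact hxy.finSnoc (by rwa [Matrix.range_cons_cons_empty])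

end LinearAlgebra

section primalMat

variable (x y : Fin 4 → ℂ)

theorem primalMat_transpose : (primalMat x y)ᵀ = -primalMat x y := by
  ext i j
  fin_cases i <;> fin_cases j <;> simp [primalMat]

theorem primalMat_mulVec_left : primalMat x y *ᵥ x = 0 := by
  ext i
  fin_cases i <;>
    simp only [mulVec, dotProduct, primalMat, Fin.zero_eta, Fin.mk_one, Fin.reduceFinMk, of_apply,
      cons_val', cons_val_fin_one, cons_val_zero, cons_val_one, cons_val, Fin.sum_univ_four,
      Pi.zero_apply, Fin.isValue] <;> ring

theorem primalMat_mulVec_right : primalMat x y *ᵥ y = 0 := by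
  ext i
  fin_cases i <;>
    simp only [mulVec, dotProduct, primalMat, Fin.zero_eta, Fin.mk_one, Fin.reduceFinMk, of_apply,
      cons_val', cons_val_fin_one, cons_val_zero, cons_val_one, cons_val, Fin.sum_univ_four,
      Pi.zero_apply, Fin.isValue] <;> ring

theorem dotProduct_primalMat_mulVec_swap (u w : Fin 4 → ℂ) :
    u ⬝ᵥ (primalMat x y *ᵥ w) = -(w ⬝ᵥ (primalMat x y *ᵥ u)) := by
  rw [dotProduct_mulVec, ← mulVec_transpose, primalMat_transpose, neg_mulVec, neg_dotProduct,
    dotProduct_comm]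

theorem dotProduct_primalMat_mulVec_self (u : Fin 4 → ℂ) : u ⬝ᵥ (primalMat x y *ᵥ u) = 0 :=
  self_eq_neg.mp (dotProduct_primalMat_mulVec_swap x y u u)

theorem dotProduct_primalMat_mulVec (u w : Fin 4 → ℂ) :
    u ⬝ᵥ (primalMat x y *ᵥ w) = (Matrix.of ![x, y, u, w]).det := by
  rw [det_succ_row_zero]
  simp only [dotProduct, mulVec, primalMat, Fin.isValue, neg_sub, of_apply, cons_val',
    cons_val_fin_one, Fin.sum_univ_succ, cons_val_zero, cons_val_succ, Fin.succ_zero_eq_one,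
    Fin.succ_one_eq_two, Finset.univ_unique, Fin.default_eq_zero, Finset.sum_singleton,
    Fin.reduceSucc, zero_mul, zero_add, add_zero, Nat.succ_eq_add_one, Nat.reduceAdd,
    det_fin_three, submatrix_apply, Fin.succAbove, Fin.castSucc_zero, cons_val_one,
    Fin.castSucc_one, cons_val, Fin.reduceCastSucc, Fin.coe_ofNat_eq_mod, Nat.zero_mod, pow_zero,
    one_mul, lt_self_iff_false, ↓reduceIte, not_lt_zero, Fin.val_succ, Fin.succ_pos, pow_one,
    neg_mul, Fin.lt_one_iff, Fin.reduceEq, even_two, Even.neg_pow, one_pow, Fin.reduceLT,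
    Fin.val_eq_zero]
  ring

variable {x y}

theorem primalMat_mulVec_eq_zero_of_mem {v : Fin 4 → ℂ} (hv : v ∈ span ℂ {x, y}) :
    primalMat x y *ᵥ v = 0 := by
  obtain ⟨s, t, rfl⟩ := mem_span_pair.mp hv
  simp [mulVec_add, mulVec_smul, primalMat_mulVec_left, primalMat_mulVec_right]

theorem dotProduct_primalMat_mulVec_eq_zero_of_mem {u : Fin 4 → ℂ} (hu : u ∈ span ℂ {x, y})
    (w : Fin 4 → ℂ) : u ⬝ᵥ (primalMat x y *ᵥ w) = 0 := by
  rw [dotProduct_primalMat_mulVec_swap, primalMat_mulVec_eq_zero_of_mem hu, dotProduct_zero,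
    neg_zero]

theorem dotProduct_primalMat_mulVec_ne_zero {u w : Fin 4 → ℂ}
    (h : LinearIndependent ℂ ![x, y, u, w]) :
    u ⬝ᵥ (primalMat x y *ᵥ w) ≠ 0 := by
  rw [dotProduct_primalMat_mulVec]
  exact ((isUnit_iff_isUnit_det _).mp (linearIndependent_rows_iff_isUnit.mp h)).ne_zero

end primalMat

theorem not_linearIndependent_primalMat_mulVec_single {ι : Type*} [Fintype ι]
    (hι : 2 < Fintype.card ι) {x y : ι → Fin 4 → ℂ} {v : Fin 4 → ℂ} (hv0 : v ≠ 0)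
    (hv : ∀ i, v ∈ span ℂ {x i, y i}) (b : Fin 4) :
    ¬ LinearIndependent ℂ fun i => primalMat (x i) (y i) *ᵥ Pi.single b 1 := by
  by_cases hvb : LinearIndependent ℂ ![v, Pi.single b 1]
  · refine not_linearIndependent_of_dotProduct_eq_zero hvb (fun k i => ?_)
      (by simp only [Fintype.card_fin]; omega)
    fin_cases k
    · exact dotProduct_primalMat_mulVec_eq_zero_of_mem (hv i) _
    · exact dotProduct_primalMat_mulVec_self _ _ _
  · obtain ⟨t, ht⟩ : ∃ t : ℂ, t • v = Pi.single b 1 := by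
      simpa [LinearIndependent.pair_iff' hv0] using hvb
    obtain ⟨i⟩ : Nonempty ι := Fintype.card_pos_iff.mp (by omega)
    intro h
    refine h.ne_zero i (primalMat_mulVec_eq_zero_of_mem ?_)
    rw [← ht]
    exact smul_mem _ t (hv i)

theorem exists_linearIndependent_primalMat_mulVec_single {x y : Fin 3 → Fin 4 → ℂ}
    (hind : ∀ i, LinearIndependent ℂ ![x i, y i]) {p : Fin 3 → Fin 4 → ℂ}
    (hp : ∀ i j, i ≠ j → p i ∈ span ℂ {x j, y j}) (hpi : ∀ i, p i ∉ span ℂ {x i, y i}) :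
    ∃ b : Fin 4, LinearIndependent ℂ fun i => primalMat (x i) (y i) *ᵥ Pi.single b 1 := by
  set ℓ : Fin 3 → Submodule ℂ (Fin 4 → ℂ) := fun i => span ℂ {x i, y i}
  have hdim : ∀ i, finrank ℂ (ℓ i) = 2 := fun i => finrank_span_pair (hind i)
  have hp0 : ∀ i, p i ≠ 0 := fun i h => hpi i (h ▸ zero_mem _)
  set V := ℓ 0 ⊔ ℓ 1
  have hV : V ≠ ⊤ := by
    refine sup_ne_top_of_inf_ne_bot (by simp [hdim]) ((Submodule.ne_bot_iff _).mpr ?_)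
    exact ⟨p 2, mem_inf.mpr ⟨hp 2 0 (by decide), hp 2 1 (by decide)⟩, hp0 2⟩
  have hℓV : ∀ i, ℓ i ≤ V := by
    have hp01 : LinearIndependent ℂ ![p 0, p 1] := by
      refine (LinearIndependent.pair_iff' (hp0 0)).mpr fun t ht => hpi 1 ?_
      exact ht ▸ smul_mem _ t (hp 0 1 (by decide))
    have hℓ₂ : ℓ 2 = span ℂ {p 0, p 1} :=
      (span_pair_eq_of_mem (hdim 2) hp01 (hp 0 2 (by decide)) (hp 1 2 (by decide))).symm
    have hℓ₂V : ℓ 2 ≤ V := by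
      rw [hℓ₂, span_le, Set.insert_subset_iff, Set.singleton_subset_iff]
      exact ⟨mem_sup_right (hp 0 1 (by decide)), mem_sup_left (hp 1 0 (by decide))⟩
    intro i
    fin_cases i
    exacts [le_sup_left, le_sup_right, hℓ₂V]
  obtain ⟨b, hb⟩ := exists_single_notMem_of_ne_top hV
  refine ⟨b, linearIndependent_of_dotProduct_diagonal p _
    (fun i j hij => dotProduct_primalMat_mulVec_eq_zero_of_mem (hp i j hij) _) fun i => ?_⟩
  refine dotProduct_primalMat_mulVec_ne_zero
    (linearIndependent_four_of_notMem_span (hind i) (hpi i) fun h => hb ?_)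
  have hpV : p i ∈ V := hℓV (i + 1) (hp i (i + 1) (by fin_cases i <;> decide))
  refine span_le.mpr ?_ h
  rw [Set.insert_subset_iff, Set.insert_subset_iff, Set.singleton_subset_iff]
  exact ⟨hℓV i (subset_span (by simp)), hℓV i (subset_span (by simp)), hpV⟩

theorem exists_mem_span_of_inf_ne_bot {x y : Fin 3 → Fin 4 → ℂ}
    (hind : ∀ i, LinearIndependent ℂ ![x i, y i])
    (hint : ∀ i j, i ≠ j → span ℂ {x i, y i} ⊓ span ℂ {x j, y j} ≠ ⊥)
    (hdep : ∀ b : Fin 4,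
      ¬ LinearIndependent ℂ fun i => primalMat (x i) (y i) *ᵥ Pi.single b 1) :
    ∃ v : Fin 4 → ℂ, v ≠ 0 ∧ ∀ i, v ∈ span ℂ {x i, y i} := by
  have hvertex : ∀ i, ∃ p, p ≠ 0 ∧ ∀ j, i ≠ j → p ∈ span ℂ {x j, y j} := by
    intro i
    obtain ⟨p, hp, hp0⟩ :=
      (Submodule.ne_bot_iff _).mp (hint (i + 1) (i + 2) (by fin_cases i <;> decide))
    rw [mem_inf] at hp
    refine ⟨p, hp0, fun j hij => ?_⟩
    fin_cases i <;> fin_cases j <;> simp_all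
  choose p hp0 hp using hvertex
  obtain ⟨i, hi⟩ : ∃ i, p i ∈ span ℂ {x i, y i} := by
    by_contra! hnone
    obtain ⟨b, hb⟩ := exists_linearIndependent_primalMat_mulVec_single hind hp hnone
    exact hdep b hb
  exact ⟨p i, hp0 i, fun j => (eq_or_ne i j).elim (· ▸ hi) (hp i j)⟩

/-- three lines in P³ are concurrent iff they are pairwise intersecting and
for each standard basis vector `u` the three vectors `P₁u, P₂u, P₃u` are linearly dependent. -/
theorem three_lines_concurrent_iff
    (x y : Fin 3 → Fin 4 → ℂ) (ℓ : Fin 3 → Submodule ℂ (Fin 4 → ℂ))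
    (hind : ∀ i, LinearIndependent ℂ ![x i, y i])
    (hspan : ∀ i, ℓ i = Submodule.span ℂ {x i, y i}) :
    (∃ v : Fin 4 → ℂ, v ≠ 0 ∧ ∀ i, v ∈ ℓ i) ↔
      ((∀ i j, i ≠ j → ℓ i ⊓ ℓ j ≠ ⊥) ∧
        ∀ b : Fin 4, ¬ LinearIndependent ℂ
          ![primalMat (x 0) (y 0) *ᵥ Pi.single b 1,
            primalMat (x 1) (y 1) *ᵥ Pi.single b 1,
            primalMat (x 2) (y 2) *ᵥ Pi.single b 1]) := by
  obtain rfl : ℓ = fun i => span ℂ {x i, y i} := funext hspan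
  have hvec : ∀ b : Fin 4, ![primalMat (x 0) (y 0) *ᵥ Pi.single b 1,
      primalMat (x 1) (y 1) *ᵥ Pi.single b 1, primalMat (x 2) (y 2) *ᵥ Pi.single b 1] =
      fun i => primalMat (x i) (y i) *ᵥ Pi.single b 1 := fun b => by
    ext i; fin_cases i <;> rfl
  simp only [hvec]
  constructor
  · rintro ⟨v, hv0, hv⟩
    exact ⟨fun i j _ => (Submodule.ne_bot_iff _).mpr ⟨v, mem_inf.mpr ⟨hv i, hv j⟩, hv0⟩,
      not_linearIndependent_primalMat_mulVec_single (by simp) hv0 hv⟩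
  · rintro ⟨hint, hdep⟩
    exact exists_mem_span_of_inf_ne_bot hind hint hdep
end

section
/- Let L := {v ∈ ℂ⁴ : v₁ = v₂ = 0} and let X := {v ∈ ℂ⁴∖{0} : v₃ = 0, v₁² + v₂² = v₀²} (the cone over a circle in the plane v₃ = 0). Let x = (x₀,x₁,x₂,x₃) ∈ ℂ⁴ satisfy x₃ ≠ 0 and x₁² + x₂² ≠ 0. Then there are exactly two 2-dimensional subspaces W of ℂ⁴ such that x ∈ W, W ∩ L ≠ {0}, and W contains some nonzero vector of X. In other words, outside the focal locus V((x₁²+x₂²)·x₃²), exactly two distinct lines of the non-central panoramic congruence (lines meeting both L and the circle X) pass through the point x. -/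
open Submodule Module

private lemma span_pair_finrank {x v : Fin 4 → ℂ} (h : LinearIndependent ℂ ![x, v]) :
    Module.finrank ℂ (Submodule.span ℂ ({x, v} : Set (Fin 4 → ℂ))) = 2 := by
  have h2 := finrank_span_eq_card h
  have hr : Set.range ![x, v] = ({x, v} : Set (Fin 4 → ℂ)) := by
    ext w; simp [Matrix.range_cons, Matrix.range_empty]; tauto
  rw [hr] at h2
  simpa using h2

private lemma indep_aux {x p : Fin 4 → ℂ} (hx3 : x 3 ≠ 0) (hp3 : p 3 = 0)
    (hp : p ≠ 0) : LinearIndependent ℂ ![x, p] := by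
  rw [LinearIndependent.pair_iff]
  intro a b hab
  have h3 := congrFun hab 3
  simp only [Pi.add_apply, Pi.smul_apply, smul_eq_mul, hp3, mul_zero, add_zero,
    Pi.zero_apply] at h3
  rcases mul_eq_zero.1 h3 with ha | ha
  · subst ha
    simp only [zero_smul, zero_add] at hab
    rcases smul_eq_zero.1 hab with hb | hb
    · exact ⟨rfl, hb⟩
    · exact absurd hb hp
  · exact absurd ha hx3

/-- for a point `x` with `x₃ ≠ 0` and `x₁² + x₂² ≠ 0` (off the focal locus
`V((x₁²+x₂²)x₃²)`), exactly two lines of the non-central panoramic congruence pass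
through `x`: lines meeting both the axis `L = {v₁ = v₂ = 0}` and the circle
`X = {v ≠ 0 : v₃ = 0, v₁² + v₂² = v₀²}`. -/
theorem panoramic_congruence_two_lines
    (x : Fin 4 → ℂ) (hx3 : x 3 ≠ 0) (hx12 : x 1 ^ 2 + x 2 ^ 2 ≠ 0) :
    let isCongLine : Submodule ℂ (Fin 4 → ℂ) → Prop := fun W =>
      Module.finrank ℂ W = 2 ∧ x ∈ W ∧
        (∃ v ∈ W, v ≠ 0 ∧ v 1 = 0 ∧ v 2 = 0) ∧
        (∃ v ∈ W, v ≠ 0 ∧ v 3 = 0 ∧ v 1 ^ 2 + v 2 ^ 2 = v 0 ^ 2)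
    ∃ W₁ W₂ : Submodule ℂ (Fin 4 → ℂ), W₁ ≠ W₂ ∧ isCongLine W₁ ∧ isCongLine W₂ ∧
      ∀ W : Submodule ℂ (Fin 4 → ℂ), isCongLine W → W = W₁ ∨ W = W₂ := by
  intro isCongLine
  obtain ⟨s, hs⟩ := IsAlgClosed.exists_pow_nat_eq (x 1 ^ 2 + x 2 ^ 2) (n := 2) (by norm_num)
  have hs0 : s ≠ 0 := by
    intro h; apply hx12; rw [← hs, h]; ring
  set p : Fin 4 → ℂ := ![s, x 1, x 2, 0] with hpdef
  set q : Fin 4 → ℂ := ![-s, x 1, x 2, 0] with hqdef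
  have hp0 : p 0 = s := rfl
  have hp1 : p 1 = x 1 := rfl
  have hp2 : p 2 = x 2 := rfl
  have hp3 : p 3 = 0 := rfl
  have hq0 : q 0 = -s := rfl
  have hq1 : q 1 = x 1 := rfl
  have hq2 : q 2 = x 2 := rfl
  have hq3 : q 3 = 0 := rfl
  have hx12' : x 1 ≠ 0 ∨ x 2 ≠ 0 := by
    by_contra h
    push_neg at h
    exact hx12 (by rw [h.1, h.2]; ring)
  have hpne : p ≠ 0 := by
    intro h
    apply hx12
    have h1 : x 1 = 0 := by rw [← hp1, h]; rfl
    have h2 : x 2 = 0 := by rw [← hp2, h]; rfl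
    rw [h1, h2]; ring
  have hqne : q ≠ 0 := by
    intro h
    apply hx12
    have h1 : x 1 = 0 := by rw [← hq1, h]; rfl
    have h2 : x 2 = 0 := by rw [← hq2, h]; rfl
    rw [h1, h2]; ring
  have hindp : LinearIndependent ℂ ![x, p] := indep_aux hx3 hp3 hpne
  have hindq : LinearIndependent ℂ ![x, q] := indep_aux hx3 hq3 hqne
  refine ⟨span ℂ {x, p}, span ℂ {x, q}, ?_, ?_, ?_, ?_⟩
  · -- W₁ ≠ W₂
    intro h
    have hq' : q ∈ span ℂ ({x, p} : Set (Fin 4 → ℂ)) := by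
      rw [h]; exact subset_span (by simp)
    rw [mem_span_pair] at hq'
    obtain ⟨a, b, hab⟩ := hq'
    have h0 := congrFun hab 0
    have h1 := congrFun hab 1
    have h2 := congrFun hab 2
    have h3 := congrFun hab 3
    simp only [Pi.add_apply, Pi.smul_apply, smul_eq_mul, hp0, hp1, hp2, hp3, hq0, hq1, hq2,
      hq3, mul_zero, add_zero] at h0 h1 h2 h3
    have ha : a = 0 := (mul_eq_zero.1 h3).resolve_right hx3
    subst ha
    simp only [zero_mul, zero_add] at h0 h1 h2
    have hb : b = 1 := by
      rcases hx12' with hxx | hxx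
      · exact mul_right_cancel₀ hxx (by rw [one_mul]; exact h1)
      · exact mul_right_cancel₀ hxx (by rw [one_mul]; exact h2)
    rw [hb, one_mul] at h0
    apply hs0
    have h2s : (2 : ℂ) * s = 0 := by linear_combination h0
    simpa using h2s
  · -- isCongLine W₁
    refine ⟨span_pair_finrank hindp, subset_span (by simp), ⟨x - p, ?_, ?_, ?_, ?_⟩,
      ⟨p, subset_span (by simp), hpne, hp3, ?_⟩⟩
    · exact sub_mem (subset_span (by simp)) (subset_span (by simp))
    · intro h
      apply hx3
      have h3 := congrFun h 3
      simpa [hp3] using h3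
    · simp [hp1]
    · simp [hp2]
    · rw [hp1, hp2, hp0, hs]
  · -- isCongLine W₂
    refine ⟨span_pair_finrank hindq, subset_span (by simp), ⟨x - q, ?_, ?_, ?_, ?_⟩,
      ⟨q, subset_span (by simp), hqne, hq3, ?_⟩⟩
    · exact sub_mem (subset_span (by simp)) (subset_span (by simp))
    · intro h
      apply hx3
      have h3 := congrFun h 3
      simpa [hq3] using h3
    · simp [hq1]
    · simp [hq2]
    · rw [hq1, hq2, hq0]; linear_combination -hs
  · -- uniqueness
    rintro W ⟨hrk, hxW, ⟨l, hlW, hlne, hl1, hl2⟩, ⟨v, hvW, hvne, hv3, hveq⟩⟩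
    have hindv : LinearIndependent ℂ ![x, v] := indep_aux hx3 hv3 hvne
    have hsub : span ℂ ({x, v} : Set (Fin 4 → ℂ)) ≤ W := by
      rw [span_le]
      rintro y (rfl | rfl)
      exacts [hxW, hvW]
    have hWeq : span ℂ ({x, v} : Set (Fin 4 → ℂ)) = W :=
      Submodule.eq_of_le_of_finrank_eq hsub (by rw [span_pair_finrank hindv, hrk])
    have hl : l ∈ span ℂ ({x, v} : Set (Fin 4 → ℂ)) := hWeq ▸ hlW
    rw [mem_span_pair] at hl
    obtain ⟨a, b, hab⟩ := hl
    have h1 := congrFun hab 1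
    have h2 := congrFun hab 2
    simp only [Pi.add_apply, Pi.smul_apply, smul_eq_mul, hl1, hl2] at h1 h2
    have ha : a ≠ 0 := by
      rintro rfl
      simp only [zero_mul, zero_add] at h1 h2
      have hb : b ≠ 0 := by
        rintro rfl
        apply hlne
        simpa using hab.symm
      have hv1 : v 1 = 0 := (mul_eq_zero.1 h1).resolve_left hb
      have hv2 : v 2 = 0 := (mul_eq_zero.1 h2).resolve_left hb
      have hv0 : v 0 = 0 := by
        have hsq : v 0 ^ 2 = 0 := by rw [← hveq, hv1, hv2]; ring
        exact pow_eq_zero_iff (by norm_num) |>.1 hsq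
      apply hvne
      funext i
      fin_cases i
      · exact hv0
      · exact hv1
      · exact hv2
      · exact hv3
    have hb : b ≠ 0 := by
      rintro rfl
      simp only [zero_mul, add_zero] at h1 h2
      rcases hx12' with hxx | hxx
      · exact hxx ((mul_eq_zero.1 h1).resolve_left ha)
      · exact hxx ((mul_eq_zero.1 h2).resolve_left ha)
    set μ : ℂ := -(a / b) with hμ
    have hμ0 : μ ≠ 0 := by
      simp [hμ, div_eq_zero_iff, ha, hb]
    have hv1 : v 1 = μ * x 1 := by
      rw [hμ]; field_simp; linear_combination h1
    have hv2 : v 2 = μ * x 2 := by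
      rw [hμ]; field_simp; linear_combination h2
    have hv0 : (v 0 - μ * s) * (v 0 + μ * s) = 0 := by
      have hsq : v 0 ^ 2 = μ ^ 2 * s ^ 2 := by
        rw [← hveq, hv1, hv2]
        have : s ^ 2 = x 1 ^ 2 + x 2 ^ 2 := hs
        linear_combination (-(μ ^ 2)) * this
      linear_combination hsq
    have key : ∀ r : Fin 4 → ℂ, v = μ • r → r ∈ W := by
      intro r hr
      have hri : r = μ⁻¹ • v := by rw [hr, smul_smul, inv_mul_cancel₀ hμ0, one_smul]
      rw [hri]
      exact smul_mem _ _ hvW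
    rcases mul_eq_zero.1 hv0 with hh | hh
    · left
      have hv00 : v 0 = μ * s := by linear_combination hh
      have hvp : v = μ • p := by
        funext i
        fin_cases i
        · show v 0 = μ * p 0
          rw [hp0]; exact hv00
        · show v 1 = μ * p 1
          rw [hp1]; exact hv1
        · show v 2 = μ * p 2
          rw [hp2]; exact hv2
        · show v 3 = μ * p 3
          rw [hp3, mul_zero]; exact hv3
      have hpW : p ∈ W := key p hvp
      have hle : span ℂ ({x, p} : Set (Fin 4 → ℂ)) ≤ W := by
        rw [span_le]
        rintro y (rfl | rfl)
        exacts [hxW, hpW]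
      exact (Submodule.eq_of_le_of_finrank_eq hle
        (by rw [span_pair_finrank hindp, hrk])).symm
    · right
      have hv00 : v 0 = μ * (-s) := by linear_combination hh
      have hvq : v = μ • q := by
        funext i
        fin_cases i
        · show v 0 = μ * q 0
          rw [hq0]; exact hv00
        · show v 1 = μ * q 1
          rw [hq1]; exact hv1
        · show v 2 = μ * q 2
          rw [hq2]; exact hv2
        · show v 3 = μ * q 3
          rw [hq3, mul_zero]; exact hv3
      have hqW : q ∈ W := key q hvq
      have hle : span ℂ ({x, q} : Set (Fin 4 → ℂ)) ≤ W := by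
        rw [span_le]
        rintro y (rfl | rfl)
        exacts [hxW, hqW]
      exact (Submodule.eq_of_le_of_finrank_eq hle
        (by rw [span_pair_finrank hindq, hrk])).symm
end

section
/- Let A, B, C, D be 2×4 matrices over ℂ, each with rows indexed by {1,2}. For i, j, k, l ∈ {1,2} define the quadrifocal tensor entries f_{ijkl} := (−1)^{i+j+k+l} · det M(i,j,k,l), where M(i,j,k,l) is the 4×4 matrix whose rows are A_{î}, B_{ĵ}, C_{k̂}, D_{l̂}, and î denotes the element of {1,2} different from i (similarly ĵ, k̂, l̂). Then for every x ∈ ℂ⁴: Σ_{i,j,k,l ∈ {1,2}} f_{ijkl} · (Ax)_i · (Bx)_j · (Cx)_k · (Dx)_l = 0. -/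
open Matrix


lemma my_det_fin_four {R : Type*} [CommRing R] (M : Matrix (Fin 4) (Fin 4) R) :
    M.det =
      M 0 0 * (M 1 1 * (M 2 2 * M 3 3 - M 2 3 * M 3 2) - M 1 2 * (M 2 1 * M 3 3 - M 2 3 * M 3 1) + M 1 3 * (M 2 1 * M 3 2 - M 2 2 * M 3 1))
    - M 0 1 * (M 1 0 * (M 2 2 * M 3 3 - M 2 3 * M 3 2) - M 1 2 * (M 2 0 * M 3 3 - M 2 3 * M 3 0) + M 1 3 * (M 2 0 * M 3 2 - M 2 2 * M 3 0))
    + M 0 2 * (M 1 0 * (M 2 1 * M 3 3 - M 2 3 * M 3 1) - M 1 1 * (M 2 0 * M 3 3 - M 2 3 * M 3 0) + M 1 3 * (M 2 0 * M 3 1 - M 2 1 * M 3 0))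
    - M 0 3 * (M 1 0 * (M 2 1 * M 3 2 - M 2 2 * M 3 1) - M 1 1 * (M 2 0 * M 3 2 - M 2 2 * M 3 0) + M 1 2 * (M 2 0 * M 3 1 - M 2 1 * M 3 0)) := by
  rw [Matrix.det_succ_row_zero]
  simp [Fin.sum_univ_succ, Matrix.det_fin_three, Matrix.submatrix, Fin.succAbove,
    show (Fin.succ 2 : Fin 4) = 3 from rfl, show (Fin.castSucc 2 : Fin 4) = 2 from rfl,
    show ((1:Fin 4) < Fin.succ 2) = True from by decide]
  ring

set_option maxHeartbeats 1000000 in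
/-- the quadrifocal constraint for two linear two-slit cameras `(A,B)` and
`(C,D)`.  With `f_{ijkl} = (−1)^{i+j+k+l} det(A_{î}, B_{ĵ}, C_{k̂}, D_{l̂})` (1-based
indices in `{1,2}`, hats denoting the complementary index, realized by `Fin.rev`), we have
`Σ f_{ijkl} (Ax)_i (Bx)_j (Cx)_k (Dx)_l = 0` for all `x`. -/
theorem quadrifocal_tensor_constraint
    (A B C D : Matrix (Fin 2) (Fin 4) ℂ) (x : Fin 4 → ℂ) :
    ∑ i : Fin 2, ∑ j : Fin 2, ∑ k : Fin 2, ∑ l : Fin 2,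
      ((-1 : ℂ) ^ ((((i : ℕ) + 1) + ((j : ℕ) + 1)) + (((k : ℕ) + 1) + ((l : ℕ) + 1))) *
          (Matrix.of ![A i.rev, B j.rev, C k.rev, D l.rev]).det)
        * (A *ᵥ x) i * (B *ᵥ x) j * (C *ᵥ x) k * (D *ᵥ x) l = 0 := by
  set M : Matrix (Fin 4) (Fin 4) ℂ := Matrix.of
    ![(A *ᵥ x) 1 • A 0 - (A *ᵥ x) 0 • A 1,
      (B *ᵥ x) 1 • B 0 - (B *ᵥ x) 0 • B 1,
      (C *ᵥ x) 1 • C 0 - (C *ᵥ x) 0 • C 1,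
      (D *ᵥ x) 1 • D 0 - (D *ᵥ x) 0 • D 1] with hM
  have hdet : M.det = 0 := by
    rcases eq_or_ne x 0 with rfl | hx
    · have : M = Matrix.of ![0, 0, 0, 0] := by
        rw [hM]; simp [Matrix.mulVec_zero]
      rw [this, my_det_fin_four]
      simp
    · refine (Matrix.exists_mulVec_eq_zero_iff).mp ⟨x, hx, ?_⟩
      funext r
      have key : ∀ E : Matrix (Fin 2) (Fin 4) ℂ,
          ((E *ᵥ x) 1 • E 0 - (E *ᵥ x) 0 • E 1) ⬝ᵥ x = 0 := by
        intro E
        simp only [sub_dotProduct, smul_dotProduct, smul_eq_mul]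
        have h0 : E 0 ⬝ᵥ x = (E *ᵥ x) 0 := rfl
        have h1 : E 1 ⬝ᵥ x = (E *ᵥ x) 1 := rfl
        rw [h0, h1]; ring
      fin_cases r <;>
        simpa [hM, Matrix.mulVec, Matrix.of_apply] using
          (by first
            | exact key A
            | exact key B
            | exact key C
            | exact key D)
  have expand : (∑ i : Fin 2, ∑ j : Fin 2, ∑ k : Fin 2, ∑ l : Fin 2,
      ((-1 : ℂ) ^ ((((i : ℕ) + 1) + ((j : ℕ) + 1)) + (((k : ℕ) + 1) + ((l : ℕ) + 1))) *
          (Matrix.of ![A i.rev, B j.rev, C k.rev, D l.rev]).det)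
        * (A *ᵥ x) i * (B *ᵥ x) j * (C *ᵥ x) k * (D *ᵥ x) l) = M.det := by
    rw [hM]
    simp only [Fin.sum_univ_two, my_det_fin_four, Matrix.of_apply, Matrix.cons_val',
      Matrix.cons_val_zero, Matrix.cons_val_one, Matrix.head_cons, Matrix.empty_val',
      Matrix.cons_val_fin_one, Matrix.cons_val_two, Matrix.cons_val_three, Matrix.tail_cons,
      show (0:Fin 2).rev = 1 from rfl, show (1:Fin 2).rev = 0 from rfl,
      Fin.val_zero, Fin.val_one, Pi.sub_apply, Pi.smul_apply, smul_eq_mul,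
      show ((2:Fin 4) : Fin 4) = 2 from rfl]
    norm_num
    ring
  rw [expand, hdet]
end
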